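/- With f = (1+χ)·(1-χ)^{-1} in ℚ[χ]/⟨1+χ+⋯+χ^{2^K-1}⟩, one has: w₀(f) = ∞ and w_l(f) = 0 for l ≥ 1; w_l(f ± 1) = 1 - 2^{-l} for all l; w_l(f²-1) = 2 - 2^{1-l}; w₀(f²+1) = 0, w₁(f²+1) = ∞, and w_l(f²+1) = 1 for l ≥ 2. -/

import Mathlib

noncomputable section
open Polynomial

/-- The quotient ring ℚ[χ]/⟨1+χ+⋯+χ^{2^K-1}⟩. -/
abbrev QB (K : ℕ) :=
  Polynomial ℚ ⧸ Ideal.span {(∑ i ∈ Finset.range (2 ^ K), X ^ i : Polynomial ℚ)}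

def mkB (K : ℕ) : Polynomial ℚ →+* QB K := Ideal.Quotient.mk _

/-- The quotient ring ℚ[χ]/⟨1+χ^{2^l}⟩. -/
abbrev QS (l : ℕ) := Polynomial ℚ ⧸ Ideal.span {(1 + X ^ (2 ^ l) : Polynomial ℚ)}

def mkS (l : ℕ) : Polynomial ℚ →+* QS l := Ideal.Quotient.mk _

/-- `IsNF K l g w` : g admits a w_l-normal form pr_l(g) = (2^a/u)·((1-χ)^b·v₁ + 2·v₂)
with u, v₁(1) odd, 0 ≤ b < 2^l, and w = a + b/2^l. -/
def IsNF (K l : ℕ) (g : QB K) (w : ℚ) : Prop :=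
  ∃ (p : Polynomial ℚ) (a u : ℤ) (b : ℕ) (v₁ v₂ : Polynomial ℤ),
    mkB K p = g ∧ Odd u ∧ b < 2 ^ l ∧ Odd (v₁.eval 1) ∧
    mkS l p = mkS l (C ((2 : ℚ) ^ a / (u : ℚ)) *
      ((1 - X) ^ b * v₁.map (Int.castRingHom ℚ) + 2 * v₂.map (Int.castRingHom ℚ))) ∧
    w = a + (b : ℚ) / 2 ^ l

open Classical in
/-- The valuation w_l : w_l(g) = a + b/2^l from the normal form, and ∞ if
1+χ^{2^l} divides g (i.e. no normal form exists). -/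
def wl (K l : ℕ) (g : QB K) : WithTop ℚ :=
  if h : ∃ w : ℚ, IsNF K l g w then (h.choose : WithTop ℚ) else ⊤

/-- f = (1+χ)·(1-χ)⁻¹. -/
def fQ (K : ℕ) : QB K := mkB K (1 + X) * Ring.inverse (mkB K (1 - X))

/-!
For `l < K` the polynomial `1 + χ^{2^l}` divides `1 + χ + ⋯ + χ^{2^K-1}`, and modulo it
`(1 - χ)·S_l = 2 - (1 + χ^{2^l}) ≡ 2` with `S_l = 1 + χ + ⋯ + χ^{2^l-1}`. Hence `pr_l(f) = S_l - 1`,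
and `f ± 1`, `f² ± 1` project to integer polynomials in `S_l`. Over `𝔽₂` one has
`1 + χ^{2^l} = (1 + χ)^{2^l}` and `S_l = (1 + χ)^{2^l-1}`, which produces the normal forms.
They are unique: after clearing odd denominators and the smaller power of 2, reducing mod 2
leaves `(1 + χ)^b·v̄₁` with `v̄₁(1) ≠ 0`, and `b < 2^l` is its order of vanishing at `χ = 1`.
-/

open Finset

local notation "ι₂" => Int.castRingHom (ZMod 2)

section XSubCPow

variable {R : Type*} [CommRing R] [IsDomain R] {a : R} {N b b' : ℕ} {w w' : R[X]}

theorem not_X_sub_C_pow_dvd_pow_mul (hb : b < N) (hw : w.eval a ≠ 0) :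
    ¬ (X - C a) ^ N ∣ (X - C a) ^ b * w := by
  intro h
  rw [← Nat.add_sub_cancel' hb.le, pow_add,
    mul_dvd_mul_iff_left (pow_ne_zero _ (X_sub_C_ne_zero a))] at h
  exact hw (dvd_iff_isRoot.mp ((dvd_pow_self _ (Nat.sub_ne_zero_of_lt hb)).trans h))

theorem eq_of_X_sub_C_pow_dvd_sub (hb : b < N) (hb' : b' < N) (hw : w.eval a ≠ 0)
    (hw' : w'.eval a ≠ 0) (h : (X - C a) ^ N ∣ (X - C a) ^ b * w - (X - C a) ^ b' * w') :
    b = b' := by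
  wlog hle : b ≤ b' generalizing b b' w w'
  · exact (this hb' hb hw' hw (dvd_sub_comm.mp h) (le_of_not_ge hle)).symm
  by_contra hne
  have hsplit : (X - C a) ^ b * w - (X - C a) ^ b' * w'
      = (X - C a) ^ b * (w - (X - C a) ^ (b' - b) * w') := by
    rw [mul_sub, ← mul_assoc, ← pow_add, Nat.add_sub_cancel' hle]
  refine not_X_sub_C_pow_dvd_pow_mul hb ?_ (hsplit ▸ h)
  simpa [zero_pow (Nat.sub_ne_zero_of_lt (lt_of_le_of_ne hle hne))] using hw

end XSubCPow

section ModTwo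

theorem map_one_sub_X_zmod_two : (1 - X : ℤ[X]).map ι₂ = X - C 1 := by
  rw [Polynomial.map_sub, Polynomial.map_one, Polynomial.map_X, C_1, ← neg_sub, CharTwo.neg_eq]

theorem map_one_add_X_pow_two_pow_zmod_two (l : ℕ) :
    (1 + X ^ 2 ^ l : ℤ[X]).map ι₂ = (X - C 1) ^ 2 ^ l := by
  rw [C_1, sub_pow_char_pow, one_pow, CharTwo.sub_eq_add, add_comm]
  simp

theorem map_geom_sum_two_pow_zmod_two (l : ℕ) :
    (∑ i ∈ range (2 ^ l), X ^ i : ℤ[X]).map ι₂ = (X - C 1) ^ (2 ^ l - 1) := by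
  apply mul_left_cancel₀ (X_sub_C_ne_zero (1 : ZMod 2))
  rw [← pow_succ', Nat.sub_add_cancel Nat.one_le_two_pow, Polynomial.map_sum, C_1,
    sub_pow_char_pow, one_pow, mul_comm, ← geom_sum_mul]
  simp

theorem exists_eq_add_two_mul_of_map_eq {p q : ℤ[X]} (h : p.map ι₂ = q.map ι₂) :
    ∃ v : ℤ[X], p = q + 2 * v := by
  have : C 2 ∣ p - q := by
    rw [C_dvd_iff_dvd_coeff]
    intro i
    have hi := congrArg (coeff · i) h
    simp only [coeff_map, eq_intCast, ZMod.intCast_eq_intCast_iff_dvd_sub] at hi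
    simpa [dvd_sub_comm] using hi
  obtain ⟨v, hv⟩ := this
  exact ⟨v, by rw [← C_ofNat, ← hv]; ring⟩

end ModTwo

theorem geom_sum_two_pow_succ {R : Type*} [CommSemiring R] (x : R) (n : ℕ) :
    ∑ i ∈ range (2 ^ (n + 1)), x ^ i = (1 + x ^ 2 ^ n) * ∑ i ∈ range (2 ^ n), x ^ i := by
  rw [pow_succ, mul_two, sum_range_add, add_mul, one_mul, mul_sum]
  simp only [pow_add]

theorem one_add_pow_two_pow_dvd_geom_sum {R : Type*} [CommSemiring R] (x : R) {l K : ℕ}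
    (hl : l < K) : 1 + x ^ 2 ^ l ∣ ∑ i ∈ range (2 ^ K), x ^ i := by
  induction K, hl using Nat.le_induction with
  | base => exact (geom_sum_two_pow_succ x l).symm ▸ dvd_mul_right _ _
  | succ K _ ih => exact (geom_sum_two_pow_succ x K).symm ▸ dvd_mul_of_dvd_right ih _

def geomSumTwoPow (l : ℕ) : ℤ[X] := ∑ i ∈ range (2 ^ l), X ^ i

theorem eval_one_geomSumTwoPow (l : ℕ) : (geomSumTwoPow l).eval 1 = 2 ^ l := by
  simp [geomSumTwoPow]

theorem geomSumTwoPow_zero : geomSumTwoPow 0 = 1 := by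
  simp [geomSumTwoPow]

theorem geomSumTwoPow_one : geomSumTwoPow 1 = 1 + X := by
  simp [geomSumTwoPow, sum_range_succ]

theorem exists_geomSumTwoPow_eq (l : ℕ) :
    ∃ v : ℤ[X], geomSumTwoPow l = (1 - X) ^ (2 ^ l - 1) + 2 * v :=
  exists_eq_add_two_mul_of_map_eq <| by
    rw [geomSumTwoPow, map_geom_sum_two_pow_zmod_two, Polynomial.map_pow, map_one_sub_X_zmod_two]

theorem exists_one_sub_X_pow_two_pow_eq (l : ℕ) :
    ∃ ε : ℤ[X], (1 - X) ^ 2 ^ l = (1 + X ^ 2 ^ l) + 2 * ε ∧ ε.eval 1 = -1 := by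
  obtain ⟨ε, hε⟩ := exists_eq_add_two_mul_of_map_eq (p := (1 - X) ^ 2 ^ l) (q := 1 + X ^ 2 ^ l)
    (by rw [Polynomial.map_pow, map_one_sub_X_zmod_two, map_one_add_X_pow_two_pow_zmod_two])
  refine ⟨ε, hε, ?_⟩
  have h1 : (0 : ℤ) = 2 + 2 * ε.eval 1 := by simpa using congrArg (eval 1) hε
  linarith

theorem exists_sq_geomSumTwoPow_sub_one_eq {l : ℕ} (hl : 1 ≤ l) :
    ∃ v₁ v₂ : ℤ[X], v₁.eval 1 = -1 ∧ (geomSumTwoPow l - 1) ^ 2 =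
      (1 + X ^ 2 ^ l) * (1 - X) ^ (2 ^ l - 2) + 2 * ((1 - X) ^ (2 ^ l - 2) * v₁ + 2 * v₂) + 1 := by
  obtain ⟨v, hv⟩ := exists_geomSumTwoPow_eq l
  obtain ⟨ε, hε, hε1⟩ := exists_one_sub_X_pow_two_pow_eq l
  have h2 : 2 ≤ 2 ^ l := Nat.le_self_pow (by omega) 2
  refine ⟨ε + (1 - X) * (2 * v - 1), v ^ 2 - v, by simp [hε1], ?_⟩
  set k := 2 ^ l - 2
  rw [show 2 ^ l - 1 = k + 1 by omega] at hv
  rw [show (1 - X : ℤ[X]) ^ 2 ^ l = (1 - X) ^ (k + 2) by rw [show k + 2 = 2 ^ l by omega]] at hε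
  linear_combination (geomSumTwoPow l + (1 - X) ^ (k + 1) + 2 * v - 2) * hv + (1 - X) ^ k * hε

def mkSZ (l : ℕ) : ℤ[X] →+* QS l := (mkS l).comp (mapRingHom (Int.castRingHom ℚ))

theorem mkSZ_eq_mkSZ_iff {l : ℕ} {p q : ℤ[X]} :
    mkSZ l p = mkSZ l q ↔ (1 + X ^ 2 ^ l : ℤ[X]) ∣ p - q := by
  have hmonic : (1 + X ^ 2 ^ l : ℤ[X]).Monic := by
    rw [add_comm]
    exact monic_X_pow_add (by simp)
  simp only [mkSZ, mkS, RingHom.comp_apply]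
  rw [← map_dvd_map (Int.castRingHom ℚ) Int.cast_injective hmonic, Ideal.Quotient.eq,
    Ideal.mem_span_singleton]
  simp

theorem mkS_eq_mkSZ {l : ℕ} (p : ℤ[X]) : mkS l (p.map (Int.castRingHom ℚ)) = mkSZ l p := rfl

theorem isUnit_mkB_one_sub_X (K : ℕ) : IsUnit (mkB K (1 - X)) := by
  set Φ : ℚ[X] := ∑ i ∈ range (2 ^ K), X ^ i
  obtain ⟨q, hq⟩ := X_sub_C_dvd_sub_C_eval (a := 1) (p := Φ)
  have hΦ : mkB K Φ = 0 := Ideal.Quotient.eq_zero_iff_mem.mpr (Ideal.mem_span_singleton_self _)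
  have hmul : mkB K (1 - X) * mkB K q = mkB K (C (Φ.eval 1)) := by
    rw [← map_mul, ← sub_zero (mkB K (C _)), ← hΦ, ← map_sub]
    congr 1
    rw [C_1] at hq
    linear_combination hq
  have hunit : IsUnit (mkB K (C (Φ.eval 1))) :=
    (isUnit_iff_ne_zero.mpr (by simp [Φ])).map ((mkB K).comp C)
  exact isUnit_of_mul_isUnit_left (hmul ▸ hunit)

theorem fQ_mul_mkB_one_sub_X (K : ℕ) : fQ K * mkB K (1 - X) = mkB K (1 + X) := by
  rw [fQ, mul_assoc, Ring.inverse_mul_cancel _ (isUnit_mkB_one_sub_X K), mul_one]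

theorem span_geom_sum_le_span {l K : ℕ} (hl : l < K) :
    Ideal.span {(∑ i ∈ range (2 ^ K), X ^ i : ℚ[X])} ≤ Ideal.span {1 + X ^ 2 ^ l} :=
  Ideal.span_singleton_le_span_singleton.mpr (one_add_pow_two_pow_dvd_geom_sum X hl)

def prS {l K : ℕ} (hl : l < K) : QB K →+* QS l := Ideal.Quotient.factor (span_geom_sum_le_span hl)

theorem prS_mkB {l K : ℕ} (hl : l < K) (p : ℚ[X]) : prS hl (mkB K p) = mkS l p :=
  Ideal.Quotient.factor_mk _ _

theorem prS_fQ {l K : ℕ} (hl : l < K) : prS hl (fQ K) = mkSZ l (geomSumTwoPow l - 1) := by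
  have hf := congrArg (prS hl) (fQ_mul_mkB_one_sub_X K)
  rw [map_mul, prS_mkB, prS_mkB,
    show (1 - X : ℚ[X]) = (1 - X : ℤ[X]).map (Int.castRingHom ℚ) by simp,
    show (1 + X : ℚ[X]) = (1 + X : ℤ[X]).map (Int.castRingHom ℚ) by simp,
    mkS_eq_mkSZ, mkS_eq_mkSZ] at hf
  have hminus : mkSZ l ((1 - X) * geomSumTwoPow l) = 2 := by
    rw [show (2 : QS l) = mkSZ l 2 from (map_ofNat _ 2).symm, mkSZ_eq_mkSZ_iff, geomSumTwoPow,
      mul_neg_geom_sum]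
    exact ⟨-1, by ring⟩
  have hplus : mkSZ l ((1 + X) * geomSumTwoPow l) = 2 * mkSZ l (geomSumTwoPow l - 1) := by
    rw [show (2 : QS l) = mkSZ l 2 from (map_ofNat _ 2).symm, ← map_mul, mkSZ_eq_mkSZ_iff,
      geomSumTwoPow]
    refine ⟨1, ?_⟩
    linear_combination -mul_neg_geom_sum (X : ℤ[X]) (2 ^ l)
  have h2 : IsUnit (2 : QS l) := by
    have := (isUnit_iff_ne_zero.mpr (two_ne_zero (α := ℚ))).map (algebraMap ℚ (QS l))
    rwa [map_ofNat] at this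
  apply h2.mul_left_cancel
  rw [← hplus, map_mul, ← hf, ← hminus, map_mul]
  ring

def nfPoly (b : ℕ) (v₁ v₂ : ℤ[X]) : ℤ[X] := (1 - X) ^ b * v₁ + 2 * v₂

theorem intCast_mul_nfPoly (u : ℤ) (b : ℕ) (v₁ v₂ : ℤ[X]) :
    (u : ℤ[X]) * nfPoly b v₁ v₂ = nfPoly b (u * v₁) (u * v₂) := by
  rw [nfPoly, nfPoly]
  ring

theorem odd_eval_one_intCast_mul {u : ℤ} {v : ℤ[X]} (hu : Odd u) (hv : Odd (v.eval 1)) :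
    Odd ((u * v : ℤ[X]).eval 1) := by
  simpa using hu.mul hv

theorem map_nfPoly_zmod_two (b : ℕ) (v₁ v₂ : ℤ[X]) :
    (nfPoly b v₁ v₂).map ι₂ = (X - C 1) ^ b * v₁.map ι₂ := by
  rw [nfPoly, Polynomial.map_add, Polynomial.map_mul, Polynomial.map_mul, Polynomial.map_pow,
    map_one_sub_X_zmod_two, Polynomial.map_ofNat,
    show (2 : (ZMod 2)[X]) = 0 from CharTwo.two_eq_zero, zero_mul, add_zero]

theorem eval_one_map_zmod_two_ne_zero {v : ℤ[X]} (hv : Odd (v.eval 1)) :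
    (v.map ι₂).eval 1 ≠ 0 := by
  rw [eval_one_map, eq_intCast, ZMod.intCast_eq_one_iff_odd.mpr hv]
  exact one_ne_zero

section NormalForm

variable {l b b' : ℕ} {v₁ v₂ v₁' v₂' : ℤ[X]}

theorem not_dvd_nfPoly (hb : b < 2 ^ l) (hv : Odd (v₁.eval 1)) :
    ¬ (1 + X ^ 2 ^ l : ℤ[X]) ∣ nfPoly b v₁ v₂ := fun h ↦
  not_X_sub_C_pow_dvd_pow_mul hb (eval_one_map_zmod_two_ne_zero hv) <| by
    have := Polynomial.map_dvd ι₂ h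
    rwa [map_nfPoly_zmod_two, map_one_add_X_pow_two_pow_zmod_two] at this

theorem eq_of_dvd_nfPoly_sub (hb : b < 2 ^ l) (hb' : b' < 2 ^ l) (hv : Odd (v₁.eval 1))
    (hv' : Odd (v₁'.eval 1)) (h : (1 + X ^ 2 ^ l : ℤ[X]) ∣ nfPoly b v₁ v₂ - nfPoly b' v₁' v₂') :
    b = b' :=
  eq_of_X_sub_C_pow_dvd_sub hb hb' (eval_one_map_zmod_two_ne_zero hv)
    (eval_one_map_zmod_two_ne_zero hv') <| by
    have := Polynomial.map_dvd ι₂ h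
    rwa [Polynomial.map_sub, map_nfPoly_zmod_two, map_nfPoly_zmod_two,
      map_one_add_X_pow_two_pow_zmod_two] at this

theorem mkS_C_mul_nf (c : ℚ) (b : ℕ) (v₁ v₂ : ℤ[X]) :
    mkS l (C c * ((1 - X) ^ b * v₁.map (Int.castRingHom ℚ) + 2 * v₂.map (Int.castRingHom ℚ)))
      = algebraMap ℚ (QS l) c * mkSZ l (nfPoly b v₁ v₂) := by
  rw [show algebraMap ℚ (QS l) c = mkS l (C c) from rfl]
  simp [nfPoly, mkSZ]

theorem eq_of_algebraMap_mul_nf_eq {a a' u u' : ℤ} (hle : a ≤ a') (hu : Odd u) (hu' : Odd u')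
    (hb : b < 2 ^ l) (hb' : b' < 2 ^ l) (hv : Odd (v₁.eval 1)) (hv' : Odd (v₁'.eval 1))
    (h : algebraMap ℚ (QS l) (2 ^ a / u) * mkSZ l (nfPoly b v₁ v₂)
      = algebraMap ℚ (QS l) (2 ^ a' / u') * mkSZ l (nfPoly b' v₁' v₂')) :
    a = a' ∧ b = b' := by
  obtain ⟨d, rfl⟩ : ∃ d : ℕ, a' = a + d := ⟨(a' - a).toNat, by omega⟩
  have hu0 : (u : ℚ) ≠ 0 := by exact_mod_cast (by rintro rfl; simp at hu)
  have hu'0 : (u' : ℚ) ≠ 0 := by exact_mod_cast (by rintro rfl; simp at hu')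
  have hscaled : mkSZ l (u' * nfPoly b v₁ v₂) = mkSZ l ((u * 2 ^ d : ℤ) * nfPoly b' v₁' v₂') := by
    have := congrArg (algebraMap ℚ (QS l) (u * u' / 2 ^ a) * ·) h
    simp only [← mul_assoc, ← map_mul] at this
    rw [show (u * u' / 2 ^ a * (2 ^ a / u) : ℚ) = u' by field_simp,
      show (u * u' / 2 ^ a * (2 ^ (a + d) / u') : ℚ) = (u * 2 ^ d : ℤ) by
        rw [zpow_add₀ two_ne_zero, zpow_natCast]; push_cast; field_simp] at this
    simpa only [map_mul, map_intCast] using this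
  rw [mkSZ_eq_mkSZ_iff] at hscaled
  rcases d with _ | d
  · simp only [pow_zero, mul_one, intCast_mul_nfPoly] at hscaled
    exact ⟨by simp, eq_of_dvd_nfPoly_sub hb hb' (odd_eval_one_intCast_mul hu' hv)
      (odd_eval_one_intCast_mul hu hv') hscaled⟩
  · refine absurd ?_ (not_dvd_nfPoly (v₂ := u' * v₂ - u * 2 ^ d * nfPoly b' v₁' v₂') hb
      (odd_eval_one_intCast_mul hu' hv))
    convert hscaled using 1
    simp only [nfPoly]
    push_cast
    ring

end NormalForm

section Valuation

variable {K l : ℕ} {g : QB K} {w w' : ℚ}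

theorem isNF_iff (hl : l < K) :
    IsNF K l g w ↔ ∃ (a u : ℤ) (b : ℕ) (v₁ v₂ : ℤ[X]), Odd u ∧ b < 2 ^ l ∧ Odd (v₁.eval 1) ∧
      prS hl g = algebraMap ℚ (QS l) (2 ^ a / u) * mkSZ l (nfPoly b v₁ v₂) ∧
      w = a + b / 2 ^ l := by
  constructor
  · rintro ⟨p, a, u, b, v₁, v₂, rfl, hu, hb, hv, hp, hw⟩
    exact ⟨a, u, b, v₁, v₂, hu, hb, hv, by rw [prS_mkB, hp, mkS_C_mul_nf], hw⟩
  · rintro ⟨a, u, b, v₁, v₂, hu, hb, hv, hg, hw⟩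
    obtain ⟨p, rfl⟩ := Ideal.Quotient.mk_surjective g
    exact ⟨p, a, u, b, v₁, v₂, rfl, hu, hb, hv, by rw [mkS_C_mul_nf, ← hg, ← prS_mkB hl]; rfl, hw⟩

theorem IsNF.unique (hl : l < K) (h : IsNF K l g w) (h' : IsNF K l g w') : w = w' := by
  obtain ⟨a, u, b, v₁, v₂, hu, hb, hv, hg, rfl⟩ := (isNF_iff hl).mp h
  obtain ⟨a', u', b', v₁', v₂', hu', hb', hv', hg', rfl⟩ := (isNF_iff hl).mp h'
  rcases le_total a a' with hle | hle
  · obtain ⟨rfl, rfl⟩ := eq_of_algebraMap_mul_nf_eq hle hu hu' hb hb' hv hv' (hg.symm.trans hg')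
    rfl
  · obtain ⟨rfl, rfl⟩ := eq_of_algebraMap_mul_nf_eq hle hu' hu hb' hb hv' hv (hg'.symm.trans hg)
    rfl

theorem wl_eq_of_isNF (hl : l < K) (h : IsNF K l g w) : wl K l g = w := by
  rw [wl, dif_pos ⟨w, h⟩, (Exists.choose_spec (⟨w, h⟩ : ∃ w, IsNF K l g w)).unique hl h]

theorem wl_eq_top (hl : l < K) (hg : prS hl g = 0) : wl K l g = ⊤ := by
  rw [wl, dif_neg]
  rintro ⟨w, hw⟩
  obtain ⟨a, u, b, v₁, v₂, hu, hb, hv, hg', -⟩ := (isNF_iff hl).mp hw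
  have hc : IsUnit (algebraMap ℚ (QS l) (2 ^ a / u)) :=
    (isUnit_iff_ne_zero.mpr (div_ne_zero (by positivity)
      (by exact_mod_cast (by rintro rfl; simp at hu)))).map _
  rw [hg, eq_comm, hc.mul_right_eq_zero, ← map_zero (mkSZ l), mkSZ_eq_mkSZ_iff, sub_zero] at hg'
  exact not_dvd_nfPoly hb hv hg'

theorem wl_eq_of_prS_eq (hl : l < K) {z : ℤ[X]} (hg : prS hl g = mkSZ l z) {n b : ℕ}
    {v₁ v₂ : ℤ[X]} (hz : (1 + X ^ 2 ^ l : ℤ[X]) ∣ z - 2 ^ n * nfPoly b v₁ v₂) (hb : b < 2 ^ l)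
    (hv : Odd (v₁.eval 1)) (hw : w = n + b / 2 ^ l) : wl K l g = w :=
  wl_eq_of_isNF hl <| (isNF_iff hl).mpr ⟨n, 1, b, v₁, v₂, odd_one, hb, hv,
    by rw [hg, mkSZ_eq_mkSZ_iff.mpr hz]; simp [map_ofNat], by simp [hw]⟩

end Valuation

section Values

variable {K l : ℕ}

theorem wl_zero_fQ (hK : 0 < K) : wl K 0 (fQ K) = ⊤ :=
  wl_eq_top hK (by rw [prS_fQ, geomSumTwoPow_zero, sub_self, map_zero])

theorem wl_fQ (hl : l < K) (hl1 : 1 ≤ l) : wl K l (fQ K) = (0 : ℚ) := by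
  refine wl_eq_of_prS_eq hl (prS_fQ hl) (n := 0) (b := 0) (v₁ := geomSumTwoPow l - 1) (v₂ := 0)
    ⟨0, by simp [nfPoly]⟩ (Nat.two_pow_pos l) ?_ (by simp)
  rw [eval_sub, eval_one_geomSumTwoPow, eval_one]
  exact (Int.even_pow.mpr ⟨even_two, by omega⟩).sub_odd odd_one

theorem one_sub_two_zpow_neg (l : ℕ) :
    1 - (2 : ℚ) ^ (-(l : ℤ)) = ((0 : ℕ) : ℚ) + ((2 ^ l - 1 : ℕ) : ℚ) / 2 ^ l := by
  rw [zpow_neg, zpow_natCast]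
  push_cast [Nat.one_le_two_pow]
  field_simp
  ring

theorem wl_fQ_add_one (hl : l < K) :
    wl K l (fQ K + 1) = ((1 - (2 : ℚ) ^ (-(l : ℤ)) : ℚ) : WithTop ℚ) := by
  obtain ⟨v, hv⟩ := exists_geomSumTwoPow_eq l
  exact wl_eq_of_prS_eq hl (z := geomSumTwoPow l - 1 + 1) (by simp [prS_fQ]) (v₁ := 1) (v₂ := v)
    ⟨0, by simp [nfPoly, hv]⟩ (Nat.sub_lt (Nat.two_pow_pos l) one_pos) (by simp)
    (one_sub_two_zpow_neg l)

theorem wl_fQ_sub_one (hl : l < K) :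
    wl K l (fQ K - 1) = ((1 - (2 : ℚ) ^ (-(l : ℤ)) : ℚ) : WithTop ℚ) := by
  obtain ⟨v, hv⟩ := exists_geomSumTwoPow_eq l
  exact wl_eq_of_prS_eq hl (z := geomSumTwoPow l - 1 - 1) (by simp [prS_fQ])
    (v₁ := 1) (v₂ := v - 1) ⟨0, by simp only [nfPoly, hv]; ring⟩
    (Nat.sub_lt (Nat.two_pow_pos l) one_pos) (by simp) (one_sub_two_zpow_neg l)

theorem wl_fQ_sq_sub_one (hl : l < K) :
    wl K l (fQ K ^ 2 - 1) = ((2 - (2 : ℚ) ^ (1 - (l : ℤ)) : ℚ) : WithTop ℚ) := by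
  have hg : prS hl (fQ K ^ 2 - 1) = mkSZ l ((geomSumTwoPow l - 1) ^ 2 - 1) := by simp [prS_fQ]
  rcases Nat.eq_zero_or_pos l with rfl | hl1
  · refine wl_eq_of_prS_eq hl hg (n := 0) (b := 0) (v₁ := -1) (v₂ := 0)
      ⟨0, by simp [nfPoly, geomSumTwoPow_zero]⟩ one_pos (by simp) (by norm_num)
  obtain ⟨v₁, v₂, hv₁, hsq⟩ := exists_sq_geomSumTwoPow_sub_one_eq hl1
  have h2 : 2 ≤ 2 ^ l := Nat.le_self_pow (by omega) 2
  refine wl_eq_of_prS_eq hl hg (n := 1) (b := 2 ^ l - 2) (v₁ := v₁) (v₂ := v₂)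
    ⟨(1 - X) ^ (2 ^ l - 2), by rw [nfPoly]; linear_combination hsq⟩ (by omega)
    (by simp [hv₁]) ?_
  rw [zpow_sub₀ two_ne_zero, zpow_one, zpow_natCast]
  push_cast [h2]
  field_simp
  ring

theorem prS_fQ_sq_add_one (hl : l < K) :
    prS hl (fQ K ^ 2 + 1) = mkSZ l ((geomSumTwoPow l - 1) ^ 2 + 1) := by
  simp [prS_fQ]

theorem wl_zero_fQ_sq_add_one (hK : 0 < K) : wl K 0 (fQ K ^ 2 + 1) = (0 : ℚ) :=
  wl_eq_of_prS_eq hK (prS_fQ_sq_add_one hK) (n := 0) (b := 0) (v₁ := 1) (v₂ := 0)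
    ⟨0, by simp [nfPoly, geomSumTwoPow_zero]⟩ one_pos (by simp) (by norm_num)

theorem wl_one_fQ_sq_add_one (hK : 1 < K) : wl K 1 (fQ K ^ 2 + 1) = ⊤ :=
  wl_eq_top hK <| by
    rw [prS_fQ_sq_add_one, ← map_zero (mkSZ 1), mkSZ_eq_mkSZ_iff, geomSumTwoPow_one]
    exact ⟨1, by ring⟩

theorem wl_fQ_sq_add_one (hl : l < K) (hl2 : 2 ≤ l) : wl K l (fQ K ^ 2 + 1) = (1 : ℚ) := by
  obtain ⟨v₁, v₂, hv₁, hsq⟩ := exists_sq_geomSumTwoPow_sub_one_eq (by omega : 1 ≤ l)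
  have h4 : 4 ≤ 2 ^ l := Nat.pow_le_pow_right two_pos hl2
  refine wl_eq_of_prS_eq hl (prS_fQ_sq_add_one hl) (n := 1) (b := 0)
    (v₁ := (1 - X) ^ (2 ^ l - 2) * v₁ + 1) (v₂ := v₂)
    ⟨(1 - X) ^ (2 ^ l - 2), by rw [nfPoly]; linear_combination hsq⟩ (Nat.two_pow_pos l)
    ?_ (by norm_num)
  simp [zero_pow (by omega : 2 ^ l - 2 ≠ 0)]

end Values

/-- Values of w_l on f, f ± 1, f² - 1 and f² + 1. -/
theorem stmt12 (K : ℕ) (hK : 2 ≤ K) :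
    wl K 0 (fQ K) = ⊤ ∧
    (∀ l : ℕ, 1 ≤ l → l ≤ K - 1 → wl K l (fQ K) = (0 : ℚ)) ∧
    (∀ l : ℕ, l ≤ K - 1 →
      wl K l (fQ K + 1) = ((1 - (2 : ℚ) ^ (-(l : ℤ)) : ℚ) : WithTop ℚ) ∧
      wl K l (fQ K - 1) = ((1 - (2 : ℚ) ^ (-(l : ℤ)) : ℚ) : WithTop ℚ)) ∧
    (∀ l : ℕ, l ≤ K - 1 →
      wl K l (fQ K ^ 2 - 1) = ((2 - (2 : ℚ) ^ (1 - (l : ℤ)) : ℚ) : WithTop ℚ)) ∧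
    wl K 0 (fQ K ^ 2 + 1) = (0 : ℚ) ∧
    wl K 1 (fQ K ^ 2 + 1) = ⊤ ∧
    (∀ l : ℕ, 2 ≤ l → l ≤ K - 1 → wl K l (fQ K ^ 2 + 1) = (1 : ℚ)) :=
  ⟨wl_zero_fQ (by omega), fun _ hl1 hlK ↦ wl_fQ (by omega) hl1,
    fun _ hlK ↦ ⟨wl_fQ_add_one (by omega), wl_fQ_sub_one (by omega)⟩,
    fun _ hlK ↦ wl_fQ_sq_sub_one (by omega), wl_zero_fQ_sq_add_one (by omega),
    wl_one_fQ_sq_add_one (by omega), fun _ hl2 hlK ↦ wl_fQ_sq_add_one (by omega) hl2⟩
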